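/- arXiv:2208.11321 — 2 statements merged into one kernel-verified Lean document; each statement's English description precedes it below -/
import Mathlib

section
/- Let (Ω, P) be a probability space and let X and Y be independent real-valued random variables on Ω. Let x̂, ŷ ∈ ℝ be constants, let ε₁, ε₂ ≥ 0 be error margins, and let δ₁, δ₂ ∈ [0,1] be confidence levels. If P(|X − x̂| > ε₁) < 1 − δ₁ and P(|Y − ŷ| > ε₂) < 1 − δ₂, then P(|(X − Y) − (x̂ − ŷ)| > ε₁ + ε₂) < 1 − δ₁·δ₂. -/
open MeasureTheory ProbabilityTheory

/-- Theorem 4.1 of the paper: for independent estimators `X` and `Y` of constants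
`xhat` and `yhat`, error bounds on each estimator combine into an error bound on
the signed difference, with conservative confidence `δ₁ * δ₂`. -/
theorem signed_difference_confidence
    {Ω : Type*} [MeasurableSpace Ω] (P : Measure Ω) [IsProbabilityMeasure P]
    (X Y : Ω → ℝ) (hX : Measurable X) (hY : Measurable Y)
    (hindep : IndepFun X Y P)
    (xhat yhat ε₁ ε₂ δ₁ δ₂ : ℝ)
    (hε₁ : 0 ≤ ε₁) (hε₂ : 0 ≤ ε₂)
    (hδ₁ : δ₁ ∈ Set.Icc (0:ℝ) 1) (hδ₂ : δ₂ ∈ Set.Icc (0:ℝ) 1)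
    (h1 : (P {ω | |X ω - xhat| > ε₁}).toReal < 1 - δ₁)
    (h2 : (P {ω | |Y ω - yhat| > ε₂}).toReal < 1 - δ₂) :
    (P {ω | |(X ω - Y ω) - (xhat - yhat)| > ε₁ + ε₂}).toReal < 1 - δ₁ * δ₂ := by
  set s₁ : Set ℝ := {x | |x - xhat| ≤ ε₁} with hs₁def
  set s₂ : Set ℝ := {y | |y - yhat| ≤ ε₂} with hs₂def
  have hs₁ : MeasurableSet s₁ :=
    (isClosed_le (by continuity) continuous_const).measurableSet
  have hs₂ : MeasurableSet s₂ :=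
    (isClosed_le (by continuity) continuous_const).measurableSet
  set A : Set Ω := X ⁻¹' s₁ with hAdef
  set B : Set Ω := Y ⁻¹' s₂ with hBdef
  have hA : MeasurableSet A := hX hs₁
  have hB : MeasurableSet B := hY hs₂
  have hAc : {ω | |X ω - xhat| > ε₁} = Aᶜ := by
    ext ω; simp [hAdef, hs₁def, not_le]
  have hBc : {ω | |Y ω - yhat| > ε₂} = Bᶜ := by
    ext ω; simp [hBdef, hs₂def, not_le]
  have hmul : P (A ∩ B) = P A * P B :=
    hindep.measure_inter_preimage_eq_mul s₁ s₂ hs₁ hs₂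
  -- real-valued probabilities
  have ha1 : (P A).toReal ≤ 1 := by
    have := prob_le_one (μ := P) (s := A); exact ENNReal.toReal_le_of_le_ofReal one_pos.le (by simpa using this)
  have haC : (P Aᶜ).toReal = 1 - (P A).toReal := by
    rw [measure_compl hA (measure_ne_top P A), measure_univ,
      ENNReal.toReal_sub_of_le (prob_le_one) (by simp)]
    simp
  have hbC : (P Bᶜ).toReal = 1 - (P B).toReal := by
    rw [measure_compl hB (measure_ne_top P B), measure_univ,
      ENNReal.toReal_sub_of_le (prob_le_one) (by simp)]
    simp
  rw [hAc, haC] at h1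
  rw [hBc, hbC] at h2
  have haδ : δ₁ < (P A).toReal := by linarith
  have hbδ : δ₂ < (P B).toReal := by linarith
  -- subset relation
  have hsub : {ω | |(X ω - Y ω) - (xhat - yhat)| > ε₁ + ε₂} ⊆ (A ∩ B)ᶜ := by
    intro ω hω hmem
    have h₁ : |X ω - xhat| ≤ ε₁ := hmem.1
    have h₂ : |Y ω - yhat| ≤ ε₂ := hmem.2
    have heq : (X ω - Y ω) - (xhat - yhat) = (X ω - xhat) - (Y ω - yhat) := by ring
    have hle : |(X ω - Y ω) - (xhat - yhat)| ≤ ε₁ + ε₂ := by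
      rw [heq]
      calc |(X ω - xhat) - (Y ω - yhat)| ≤ |X ω - xhat| + |Y ω - yhat| := abs_sub _ _
        _ ≤ ε₁ + ε₂ := add_le_add h₁ h₂
    exact absurd hω (not_lt.mpr hle)
  have hABc : (P ((A ∩ B)ᶜ)).toReal = 1 - (P A).toReal * (P B).toReal := by
    rw [measure_compl (hA.inter hB) (measure_ne_top P _), measure_univ,
      ENNReal.toReal_sub_of_le (prob_le_one) (by simp), hmul, ENNReal.toReal_mul]
    simp
  have hmono : (P {ω | |(X ω - Y ω) - (xhat - yhat)| > ε₁ + ε₂}).toReal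
      ≤ (P ((A ∩ B)ᶜ)).toReal :=
    ENNReal.toReal_mono (measure_ne_top P _) (measure_mono hsub)
  have hprod : δ₁ * δ₂ < (P A).toReal * (P B).toReal := by
    have hb0 : 0 ≤ δ₂ := hδ₂.1
    exact mul_lt_mul'' haδ hbδ hδ₁.1 hδ₂.1
  calc (P {ω | |(X ω - Y ω) - (xhat - yhat)| > ε₁ + ε₂}).toReal
      ≤ 1 - (P A).toReal * (P B).toReal := hABc ▸ hmono
    _ < 1 - δ₁ * δ₂ := by linarith
end

section
/- Let (Ω, P) be a probability space and let X and Y be independent real-valued random variables on Ω. Let x̂, ŷ ∈ ℝ be constants, let ε₁, ε₂ ≥ 0 be error margins, and let δ₁, δ₂ ∈ [0,1] be confidence levels. If P(|X − x̂| > ε₁) < 1 − δ₁ and P(|Y − ŷ| > ε₂) < 1 − δ₂, then P(| |X − Y| − |x̂ − ŷ| | > ε₁ + ε₂) < 1 − δ₁·δ₂. -/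
open MeasureTheory ProbabilityTheory

/-- Version of Theorem 4.1 of the paper for the group fairness score defined as an
absolute difference: the estimated score `|X - Y|` deviates from the true score
`|xhat - yhat|` by more than `ε₁ + ε₂` with probability less than `1 - δ₁ * δ₂`. -/
theorem abs_difference_confidence
    {Ω : Type*} [MeasurableSpace Ω] (P : Measure Ω) [IsProbabilityMeasure P]
    (X Y : Ω → ℝ) (hX : Measurable X) (hY : Measurable Y)
    (hindep : IndepFun X Y P)
    (xhat yhat ε₁ ε₂ δ₁ δ₂ : ℝ)
    (hε₁ : 0 ≤ ε₁) (hε₂ : 0 ≤ ε₂)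
    (hδ₁ : δ₁ ∈ Set.Icc (0:ℝ) 1) (hδ₂ : δ₂ ∈ Set.Icc (0:ℝ) 1)
    (h1 : (P {ω | |X ω - xhat| > ε₁}).toReal < 1 - δ₁)
    (h2 : (P {ω | |Y ω - yhat| > ε₂}).toReal < 1 - δ₂) :
    (P {ω | abs (|X ω - Y ω| - |xhat - yhat|) > ε₁ + ε₂}).toReal < 1 - δ₁ * δ₂ := by
  obtain ⟨hδ₁0, hδ₁1⟩ := hδ₁
  obtain ⟨hδ₂0, hδ₂1⟩ := hδ₂
  set sA : Set ℝ := {t | |t - xhat| ≤ ε₁} with hsA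
  set sB : Set ℝ := {t | |t - yhat| ≤ ε₂} with hsB
  have hmA : MeasurableSet sA := by
    have : Continuous fun t : ℝ => |t - xhat| := by continuity
    exact measurableSet_le this.measurable measurable_const
  have hmB : MeasurableSet sB := by
    have : Continuous fun t : ℝ => |t - yhat| := by continuity
    exact measurableSet_le this.measurable measurable_const
  set A : Set Ω := X ⁻¹' sA with hA
  set B : Set Ω := Y ⁻¹' sB with hB
  have hmAΩ : MeasurableSet A := hX hmA
  have hmBΩ : MeasurableSet B := hY hmB
  -- independence of the "good" events
  have hmul : P (A ∩ B) = P A * P B :=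
    hindep.measure_inter_preimage_eq_mul sA sB hmA hmB
  -- lower bounds on good event probabilities
  have hAc : P Aᶜ = P {ω | |X ω - xhat| > ε₁} := by
    congr 1
    ext ω
    simp [hA, hsA, Set.mem_setOf_eq, not_le]
  have hBc : P Bᶜ = P {ω | |Y ω - yhat| > ε₂} := by
    congr 1
    ext ω
    simp [hB, hsB, Set.mem_setOf_eq, not_le]
  have hPA : δ₁ < (P A).toReal := by
    have := prob_compl_eq_one_sub hmAΩ (μ := P)
    rw [hAc] at this
    have h' : (P {ω | |X ω - xhat| > ε₁}) = 1 - P A := this.symm ▸ rfl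
    have hle : P A ≤ 1 := prob_le_one
    have : (P {ω | |X ω - xhat| > ε₁}).toReal = 1 - (P A).toReal := by
      rw [h', ENNReal.toReal_sub_of_le hle ENNReal.one_ne_top, ENNReal.toReal_one]
    linarith [h1, this ▸ h1]
  have hPB : δ₂ < (P B).toReal := by
    have := prob_compl_eq_one_sub hmBΩ (μ := P)
    rw [hBc] at this
    have h' : (P {ω | |Y ω - yhat| > ε₂}) = 1 - P B := this.symm ▸ rfl
    have hle : P B ≤ 1 := prob_le_one
    have : (P {ω | |Y ω - yhat| > ε₂}).toReal = 1 - (P B).toReal := by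
      rw [h', ENNReal.toReal_sub_of_le hle ENNReal.one_ne_top, ENNReal.toReal_one]
    linarith [h2, this ▸ h2]
  -- inclusion: bad event ⊆ (A ∩ B)ᶜ
  have hsub : {ω | abs (|X ω - Y ω| - |xhat - yhat|) > ε₁ + ε₂} ⊆ (A ∩ B)ᶜ := by
    intro ω hω
    simp only [Set.mem_compl_iff, Set.mem_inter_iff, hA, hB, Set.mem_preimage, hsA, hsB,
      Set.mem_setOf_eq, not_and_or, not_le]
    by_contra hcon
    push_neg at hcon
    obtain ⟨ha, hb⟩ := hcon
    have key : |(X ω - Y ω) - (xhat - yhat)| ≤ ε₁ + ε₂ := by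
      have : (X ω - Y ω) - (xhat - yhat) = (X ω - xhat) - (Y ω - yhat) := by ring
      rw [this]
      exact (abs_sub _ _).trans (add_le_add ha hb)
    have := (abs_abs_sub_abs_le_abs_sub (X ω - Y ω) (xhat - yhat)).trans key
    exact absurd hω (not_lt.mpr this)
  have hmono := measure_mono (μ := P) hsub
  have hcompl : P (A ∩ B)ᶜ = 1 - P (A ∩ B) := prob_compl_eq_one_sub (μ := P) (hmAΩ.inter hmBΩ)
  have hABle : P (A ∩ B) ≤ 1 := prob_le_one
  have hcr : (P (A ∩ B)ᶜ).toReal = 1 - (P (A ∩ B)).toReal := by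
    rw [hcompl, ENNReal.toReal_sub_of_le hABle ENNReal.one_ne_top, ENNReal.toReal_one]
  have hfin : P (A ∩ B)ᶜ ≠ ⊤ := measure_ne_top _ _
  have h3 : (P {ω | abs (|X ω - Y ω| - |xhat - yhat|) > ε₁ + ε₂}).toReal
      ≤ (P (A ∩ B)ᶜ).toReal := ENNReal.toReal_mono hfin hmono
  have hprodR : (P (A ∩ B)).toReal = (P A).toReal * (P B).toReal := by
    rw [hmul, ENNReal.toReal_mul]
  have hprod : δ₁ * δ₂ < (P (A ∩ B)).toReal := by
    rw [hprodR]
    exact mul_lt_mul'' hPA hPB hδ₁0 hδ₂0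
  linarith [h3, hcr ▸ h3]
end
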